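/- arXiv:2501.08689 — 4 statements merged into one kernel-verified Lean document; each statement's English description precedes it below -/
import Mathlib

section
/- Given an LTS ⟨Q, q₀, A, →⟩, states q̂, q̌ ∈ Q and a diamond ◇ with q̂ ⟶^◇ q̌, for every non-empty sequence s ∈ A* with s ⊏− ◇, there exist a state q' ∈ Q and a diamond ◇_tl ∈ tl(◇, s) such that q̂ →^s q' and q' ⟹^{◇_tl} q̌. -/
/-- A sequence is non-monotone if it contains at least two distinct actions. -/
def NonMono {A : Type*} [DecidableEq A] (s : List A) : Prop := 2 ≤ s.toFinset.card

/-- A diamond pattern: finitely supported cardinality maps on actions and on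
non-monotone action sequences. -/
structure Diamond (A : Type*) [DecidableEq A] where
  Ca : A →₀ ℕ
  Cs : List A →₀ ℕ
  nonmono : ∀ s ∈ Cs.support, NonMono s

namespace Diamond

variable {A : Type*} [DecidableEq A]

/-- The empty diamond. -/
def emptyD : Diamond A := ⟨0, 0, by simp⟩

/-- The size of a diamond. -/
def size (d : Diamond A) : ℕ :=
  d.Ca.sum (fun _ n => n) + d.Cs.sum (fun s n => s.length * n)

/-- The head actions of a diamond. -/
def hdSet (d : Diamond A) : Set A :=
  {a | 0 < d.Ca a ∨ ∃ s : List A, 0 < d.Cs s ∧ s.head? = some a}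

/-- Single-action tail operation on diamonds. -/
def tl (d : Diamond A) (a : A) : Set (Diamond A) :=
  {d' |
    (0 < d.Ca a ∧ d'.Ca = d.Ca.update a (d.Ca a - 1) ∧ d'.Cs = d.Cs)
    ∨ (∃ s : List A, NonMono s ∧ 0 < d.Cs (a :: s) ∧ d'.Ca = d.Ca ∧
        d'.Cs = (d.Cs.update (a :: s) (d.Cs (a :: s) - 1)).update s (d.Cs s + 1))
    ∨ (∃ (b : A) (k : ℕ), 0 < k ∧ b ≠ a ∧ 0 < d.Cs (a :: List.replicate k b) ∧
        d'.Ca = d.Ca.update b (d.Ca b + k) ∧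
        d'.Cs = d.Cs.update (a :: List.replicate k b) (d.Cs (a :: List.replicate k b) - 1))}

/-- Tail operation iterated over an action sequence. -/
def tlSeq (d : Diamond A) : List A → Set (Diamond A)
  | [] => {d}
  | a :: s => ⋃ d' ∈ tl d a, tlSeq d' s

/-- `TlD d dpf r` : `r` is in the diamond-tail `tl(d, dpf)`. -/
inductive TlD : Diamond A → Diamond A → Diamond A → Prop
  | empty (d : Diamond A) : TlD d emptyD d
  | step {d dpf r : Diamond A} {a : A} {d' dpf' : Diamond A} :
      a ∈ hdSet dpf → d' ∈ tl d a → dpf' ∈ tl dpf a → TlD d' dpf' r → TlD d dpf r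

/-- The prefix relation on diamonds: `dpf ⊑ d` iff `tl(d, dpf) ≠ ∅`. -/
def Prefix (dpf d : Diamond A) : Prop := ∃ r, TlD d dpf r

/-- Sequence-of relation: `s` is an interleaving prefix of the diamond `d`. -/
inductive SeqOf : List A → Diamond A → Prop
  | nil (d : Diamond A) : SeqOf [] d
  | cons {a : A} {s : List A} {d d' : Diamond A} :
      d' ∈ tl d a → SeqOf s d' → SeqOf (a :: s) d

/-- The singleton diamond `a¹`. -/
noncomputable def singleD (a : A) : Diamond A := ⟨Finsupp.single a 1, 0, by simp⟩

end Diamond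

section LTS

variable {Q A : Type*} [DecidableEq A]

/-- Transition relation extended to action sequences. -/
inductive TrSeq (Tr : Q → A → Q → Prop) : Q → List A → Q → Prop
  | nil (q : Q) : TrSeq Tr q [] q
  | cons {q q' q'' : Q} {a : A} {s : List A} :
      Tr q a q' → TrSeq Tr q' s q'' → TrSeq Tr q (a :: s) q''

open Diamond in
/-- Fuel-indexed strict diamond convergence (the fuel is the diamond size;
every tail step decreases the size by exactly one). -/
def SConvF (Tr : Q → A → Q → Prop) (R : Q → Q → Prop) :
    ℕ → Diamond A → Q → Q → Prop
  | 0, d, q, q' => d = emptyD ∧ R q q'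
  | n + 1, d, q, q' =>
    (d = emptyD ∧ R q q') ∨
    (d ≠ emptyD ∧
      (∀ a ∈ hdSet d, ∀ d' ∈ tl d a, ∃ p, Tr q a p ∧ SConvF Tr R n d' p q') ∧
      (∀ (a : A) (p : Q), Tr q a p → ∃ d' ∈ tl d a, SConvF Tr R n d' p q'))

/-- Strict diamond convergence up to `R`: `SConv Tr R d q̂ q̌` means
`q̂ ⟹^d [q̌]_R`. -/
def SConv (Tr : Q → A → Q → Prop) (R : Q → Q → Prop)
    (d : Diamond A) (q q' : Q) : Prop :=
  SConvF Tr R d.size d q q'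

open Diamond in
/-- (Non-strict) diamond convergence up to `R`: `Conv Tr R d q̂ q̌` means
`q̂ ⟶^d [q̌]_R`. -/
def Conv (Tr : Q → A → Q → Prop) (R : Q → Q → Prop)
    (d : Diamond A) (q q' : Q) : Prop :=
  (d = emptyD ∧ R q q') ∨
  (d ≠ emptyD ∧ ∀ a ∈ hdSet d, ∀ d' ∈ tl d a, ∃ p, Tr q a p ∧ SConv Tr R d' p q')

end LTS

namespace DiamondAux

open Diamond

variable {A : Type*} [DecidableEq A]

lemma ne_empty_of_tl {d d' : Diamond A} {a : A} (h : d' ∈ tl d a) : d ≠ emptyD := by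
  rintro rfl
  simp only [tl, Set.mem_setOf_eq, emptyD] at h
  rcases h with ⟨h, _⟩ | ⟨s, _, h, _⟩ | ⟨b, k, _, _, h, _⟩ <;> simp at h

lemma mem_hdSet_of_tl {d d' : Diamond A} {a : A} (h : d' ∈ tl d a) : a ∈ hdSet d := by
  rcases h with ⟨h, _⟩ | ⟨s, _, h, _⟩ | ⟨b, k, _, _, h, _⟩
  · exact Or.inl h
  · exact Or.inr ⟨a :: s, h, rfl⟩
  · exact Or.inr ⟨a :: List.replicate k b, h, rfl⟩

private lemma mul_pred {k c : ℕ} (hc : 0 < c) : (k + 1) * (c - 1) + (k + 1) = (k + 1) * c := by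
  conv_rhs => rw [← Nat.succ_pred_eq_of_pos hc]
  rw [Nat.mul_succ]
  rfl

lemma size_tl {d d' : Diamond A} {a : A} (h : d' ∈ tl d a) : d'.size + 1 = d.size := by
  rcases h with ⟨hpos, hCa, hCs⟩ | ⟨s, hnm, hpos, hCa, hCs⟩ | ⟨b, k, hk, hba, hpos, hCa, hCs⟩
  · have h1 := Finsupp.sum_update_add d.Ca a (d.Ca a - 1) (fun _ n => n)
      (fun _ => rfl) (fun _ _ _ => rfl)
    simp only [size, hCa, hCs]
    omega
  · -- NonMono s so s ≠ a :: s and s ≠ [], lengths differ anyway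
    have hne : s ≠ a :: s := fun he => by
      have := congrArg List.length he; simp at this
    have h1 := Finsupp.sum_update_add d.Cs (a :: s) (d.Cs (a :: s) - 1)
      (fun t n => t.length * n) (fun _ => by simp) (fun _ _ _ => by ring)
    have h2 := Finsupp.sum_update_add (d.Cs.update (a :: s) (d.Cs (a :: s) - 1)) s
      (d.Cs s + 1) (fun t n => t.length * n) (fun _ => by simp) (fun _ _ _ => by ring)
    have hval : (d.Cs.update (a :: s) (d.Cs (a :: s) - 1)) s = d.Cs s := by
      rw [Finsupp.coe_update]; simp [hne]
    rw [hval] at h2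
    simp only [size, hCa, hCs, List.length_cons] at *
    have hmp := mul_pred (k := s.length) (c := d.Cs (a :: s)) hpos
    set L := s.length
    set X := d.Cs.sum fun t n => t.length * n
    set Y := (d.Cs.update (a :: s) (d.Cs (a :: s) - 1)).sum fun t n => t.length * n
    set Z := ((d.Cs.update (a :: s) (d.Cs (a :: s) - 1)).update s (d.Cs s + 1)).sum
      fun t n => t.length * n
    -- h1 : Y + (L+1) * d.Cs (a::s) = X + (L+1) * (d.Cs (a::s) - 1)
    -- h2 : Z + L * d.Cs s = Y + L * (d.Cs s + 1)
    have : L * (d.Cs s + 1) = L * d.Cs s + L := by ring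
    omega
  · have h1 := Finsupp.sum_update_add d.Ca b (d.Ca b + k) (fun _ n => n)
      (fun _ => rfl) (fun _ _ _ => rfl)
    have h2 := Finsupp.sum_update_add d.Cs (a :: List.replicate k b)
      (d.Cs (a :: List.replicate k b) - 1) (fun t n => t.length * n)
      (fun _ => by simp) (fun _ _ _ => by ring)
    simp only [size, hCa, hCs, List.length_cons, List.length_replicate] at *
    have hmp := mul_pred (k := k) (c := d.Cs (a :: List.replicate k b)) hpos
    omega

lemma sconv_seq {Q : Type*} (Tr : Q → A → Q → Prop) :
    ∀ (s : List A) (d : Diamond A) (q q' : Q), SConv Tr Eq d q q' → SeqOf s d →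
      ∃ (q'' : Q) (dtl : Diamond A), dtl ∈ tlSeq d s ∧ TrSeq Tr q s q'' ∧
        SConv Tr Eq dtl q'' q' := by
  intro s
  induction s with
  | nil =>
    intro d q q' hc _
    exact ⟨q, d, by simp [tlSeq], TrSeq.nil q, hc⟩
  | cons a s ih =>
    intro d q q' hc hseq
    rcases hseq with _ | @⟨_, _, _, d', hd', hseq'⟩
    have hsz := size_tl hd'
    have hne := ne_empty_of_tl hd'
    unfold SConv at hc
    rw [← hsz] at hc
    rcases hc with ⟨he, _⟩ | ⟨_, hfwd, _⟩
    · exact absurd he hne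
    obtain ⟨p, htr, hsc⟩ := hfwd a (mem_hdSet_of_tl hd') d' hd'
    obtain ⟨q'', dtl, hmem, htrs, hsc'⟩ := ih d' p q' hsc hseq'
    refine ⟨q'', dtl, ?_, TrSeq.cons htr htrs, hsc'⟩
    simp only [tlSeq, Set.mem_iUnion]
    exact ⟨d', hd', hmem⟩

end DiamondAux

open Diamond DiamondAux in
theorem stmt6 {Q A : Type*} [DecidableEq A] (Tr : Q → A → Q → Prop)
    (qh qc : Q) (d : Diamond A) (h : Conv Tr Eq d qh qc) :
    ∀ s : List A, s ≠ [] → SeqOf s d →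
      ∃ (q' : Q) (dtl : Diamond A), dtl ∈ tlSeq d s ∧ TrSeq Tr qh s q' ∧
        SConv Tr Eq dtl q' qc := by
  intro s hs hseq
  match s, hseq with
  | a :: s, @SeqOf.cons _ _ _ _ _ d' hd' hseq' =>
    rcases h with ⟨he, _⟩ | ⟨_, hfwd⟩
    · exact absurd he (ne_empty_of_tl hd')
    obtain ⟨p, htr, hsc⟩ := hfwd a (mem_hdSet_of_tl hd') d' hd'
    obtain ⟨q'', dtl, hmem, htrs, hsc'⟩ := sconv_seq Tr s d' p qc hsc hseq'
    refine ⟨q'', dtl, ?_, TrSeq.cons htr htrs, hsc'⟩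
    simp only [tlSeq, Set.mem_iUnion]
    exact ⟨d', hd', hmem⟩
end

section
/- Given any LTS ⟨Q, q₀, A, →⟩, states q, q₁, q₂ ∈ Q, and diamonds ◇₁, ◇₂, if q ⟹^{◇₁} q₁ and q ⟹^{◇₂} q₂ then either ◇₁ ⊑ ◇₂ or ◇₂ ⊑ ◇₁ (one diamond is a prefix of the other). -/
section AuxLemmas

namespace Diamond

variable {A : Type*} [DecidableEq A]

lemma wsum_update {β : Type*} [DecidableEq β] (f : β →₀ ℕ) (w : β → ℕ) (a : β) (v : ℕ) :
    (f.update a v).sum (fun x n => w x * n) + w a * f a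
      = f.sum (fun x n => w x * n) + w a * v := by
  rw [Finsupp.update_eq_erase_add_single,
    Finsupp.sum_add_index (by simp) (by intros; ring),
    Finsupp.sum_single_index (by simp)]
  conv_rhs => rw [← Finsupp.single_add_erase a f,
    Finsupp.sum_add_index (by simp) (by intros; ring),
    Finsupp.sum_single_index (by simp)]
  ring

lemma casum_update (f : A →₀ ℕ) (a : A) (v : ℕ) :
    (f.update a v).sum (fun _ n => n) + f a = f.sum (fun _ n => n) + v := by
  simpa using wsum_update f (fun _ => 1) a v

lemma cssum_update (f : List A →₀ ℕ) (s : List A) (v : ℕ) :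
    (f.update s v).sum (fun t n => t.length * n) + s.length * f s
      = f.sum (fun t n => t.length * n) + s.length * v :=
  wsum_update f List.length s v

lemma update_noteq' {β : Type*} [DecidableEq β] (f : β →₀ ℕ) (a : β) (v : ℕ) {x : β}
    (h : x ≠ a) : f.update a v x = f x := by
  simp [Finsupp.update, h]

lemma size_tl {d d' : Diamond A} {a : A} (h : d' ∈ tl d a) : d'.size + 1 = d.size := by
  rcases h with ⟨hpos, hCa, hCs⟩ | ⟨s, _, hpos, hCa, hCs⟩ | ⟨b, k, hk, hba, hpos, hCa, hCs⟩
  · obtain ⟨c, hc⟩ : ∃ c, d.Ca a = c + 1 := ⟨_, (Nat.succ_pred_eq_of_pos hpos).symm⟩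
    have h1 := casum_update d.Ca a (d.Ca a - 1)
    simp only [size, hCa, hCs]
    omega
  · obtain ⟨c, hc⟩ : ∃ c, d.Cs (a :: s) = c + 1 := ⟨_, (Nat.succ_pred_eq_of_pos hpos).symm⟩
    have h1 := cssum_update d.Cs (a :: s) (d.Cs (a :: s) - 1)
    have h2 := cssum_update (d.Cs.update (a :: s) (d.Cs (a :: s) - 1)) s (d.Cs s + 1)
    have hgs : (d.Cs.update (a :: s) (d.Cs (a :: s) - 1)) s = d.Cs s :=
      update_noteq' _ _ _ (by simp)
    rw [hgs] at h2
    simp only [size, hCa, hCs, List.length_cons, hc, Nat.add_sub_cancel] at h1 h2 ⊢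
    ring_nf at h1 h2 ⊢
    linarith
  · obtain ⟨c, hc⟩ : ∃ c, d.Cs (a :: List.replicate k b) = c + 1 :=
      ⟨_, (Nat.succ_pred_eq_of_pos hpos).symm⟩
    have h1 := casum_update d.Ca b (d.Ca b + k)
    have h2 := cssum_update d.Cs (a :: List.replicate k b)
      (d.Cs (a :: List.replicate k b) - 1)
    simp only [size, hCa, hCs, List.length_cons, List.length_replicate, hc,
      Nat.add_sub_cancel, Nat.mul_add, Nat.add_mul, Nat.mul_one, Nat.one_mul] at h1 h2 ⊢
    omega

lemma eq_empty_of_size_zero {d : Diamond A} (h : d.size = 0) : d = emptyD := by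
  obtain ⟨Ca, Cs, hnm⟩ := d
  simp only [size] at h
  have hCa : Ca = 0 := by
    ext x
    by_contra hx
    have hx' : x ∈ Ca.support := Finsupp.mem_support_iff.2 hx
    have : Ca.sum (fun _ n => n) = 0 := by omega
    rw [Finsupp.sum, Finset.sum_eq_zero_iff] at this
    exact hx (this x hx')
  have hCs : Cs = 0 := by
    ext x
    by_contra hx
    have hx' : x ∈ Cs.support := Finsupp.mem_support_iff.2 hx
    have h0 : Cs.sum (fun s n => s.length * n) = 0 := by omega
    rw [Finsupp.sum, Finset.sum_eq_zero_iff] at h0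
    have := h0 x hx'
    have hlen : x.length = 0 := by
      rcases Nat.mul_eq_zero.1 this with h' | h'
      · exact h'
      · exact absurd h' hx
    have := hnm x hx'
    rw [List.length_eq_zero_iff] at hlen
    subst hlen
    simp [NonMono] at this
  subst hCa; subst hCs; rfl

lemma size_pos {d : Diamond A} (h : d ≠ emptyD) : 0 < d.size := by
  rcases Nat.eq_zero_or_pos d.size with h0 | h0
  · exact absurd (eq_empty_of_size_zero h0) h
  · exact h0

lemma mem_hdSet_of_tl {d d' : Diamond A} {a : A} (h : d' ∈ tl d a) : a ∈ hdSet d := by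
  rcases h with ⟨hpos, _, _⟩ | ⟨s, _, hpos, _, _⟩ | ⟨b, k, _, _, hpos, _, _⟩
  · exact Or.inl hpos
  · exact Or.inr ⟨a :: s, hpos, rfl⟩
  · exact Or.inr ⟨a :: List.replicate k b, hpos, rfl⟩

lemma exists_tl {d : Diamond A} (h : d ≠ emptyD) : ∃ a d', d' ∈ tl d a := by
  by_cases hCa : d.Ca = 0
  · have hCs : d.Cs ≠ 0 := by
      intro h0
      apply h
      obtain ⟨Ca, Cs, hnm⟩ := d
      simp only at hCa h0
      subst hCa; subst h0; rfl
    obtain ⟨s, hs⟩ : ∃ s, d.Cs s ≠ 0 := by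
      by_contra hc
      push_neg at hc
      exact hCs (Finsupp.ext fun x => hc x)
    have hsupp : s ∈ d.Cs.support := Finsupp.mem_support_iff.2 hs
    have hnm := d.nonmono s hsupp
    obtain ⟨a, t, rfl⟩ : ∃ a t, s = a :: t := by
      cases s with
      | nil => simp [NonMono] at hnm
      | cons a t => exact ⟨a, t, rfl⟩
    have hpos : 0 < d.Cs (a :: t) := Nat.pos_of_ne_zero hs
    by_cases hT : NonMono t
    · refine ⟨a, ⟨d.Ca, (d.Cs.update (a :: t) (d.Cs (a :: t) - 1)).update t (d.Cs t + 1),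
        ?_⟩, Or.inr (Or.inl ⟨t, hT, hpos, rfl, rfl⟩)⟩
      intro x hx
      rcases eq_or_ne x t with rfl | hxt
      · exact hT
      rcases eq_or_ne x (a :: t) with rfl | hxs
      · exact hnm
      · have hx' := Finsupp.mem_support_iff.1 hx
        rw [update_noteq' _ _ _ hxt, update_noteq' _ _ _ hxs] at hx'
        exact d.nonmono x (Finsupp.mem_support_iff.2 hx')
    · -- t is a nonempty constant list replicate k b with b ≠ a
      have hcard : 2 ≤ (insert a t.toFinset).card := by
        simpa [NonMono, List.toFinset_cons] using hnm
      have hT' : t.toFinset.card ≤ 1 := by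
        simp only [NonMono, not_le] at hT
        omega
      have hcard1 : t.toFinset.card = 1 := by
        have := Finset.card_insert_le a t.toFinset
        omega
      obtain ⟨b, hb⟩ := Finset.card_eq_one.1 hcard1
      have hba : b ≠ a := by
        rintro rfl
        rw [hb] at hcard
        simp at hcard
      have hmem : ∀ x ∈ t, x = b := by
        intro x hx
        have : x ∈ t.toFinset := List.mem_toFinset.2 hx
        rw [hb] at this
        exact Finset.mem_singleton.1 this
      have htlen : 0 < t.length := by
        rcases t with _ | ⟨c, t'⟩
        · simp [List.toFinset_nil] at hb
        · simp
      have hrep : t = List.replicate t.length b :=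
        List.eq_replicate_iff.2 ⟨rfl, hmem⟩
      refine ⟨a, ⟨d.Ca.update b (d.Ca b + t.length),
        d.Cs.update (a :: List.replicate t.length b)
          (d.Cs (a :: List.replicate t.length b) - 1), ?_⟩,
        Or.inr (Or.inr ⟨b, t.length, htlen, hba, by rw [← hrep]; exact hpos, rfl, rfl⟩)⟩
      intro x hx
      rcases eq_or_ne x (a :: List.replicate t.length b) with rfl | hxs
      · rw [← hrep]; exact hnm
      · have hx' := Finsupp.mem_support_iff.1 hx
        rw [update_noteq' _ _ _ hxs] at hx'
        exact d.nonmono x (Finsupp.mem_support_iff.2 hx')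
  · obtain ⟨a, ha⟩ : ∃ a, d.Ca a ≠ 0 := by
      by_contra hc
      push_neg at hc
      exact hCa (Finsupp.ext fun x => hc x)
    exact ⟨a, ⟨d.Ca.update a (d.Ca a - 1), d.Cs, d.nonmono⟩,
      Or.inl ⟨Nat.pos_of_ne_zero ha, rfl, rfl⟩⟩

end Diamond

open Diamond in
lemma stmt7_aux {Q A : Type*} [DecidableEq A] (Tr : Q → A → Q → Prop) :
    ∀ (n : ℕ) (d1 d2 : Diamond A) (q q1 q2 : Q), d1.size + d2.size ≤ n →
      SConv Tr Eq d1 q q1 → SConv Tr Eq d2 q q2 →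
      Diamond.Prefix d1 d2 ∨ Diamond.Prefix d2 d1 := by
  intro n
  induction n with
  | zero =>
    intro d1 d2 q q1 q2 hle _ _
    have h1 : d1 = emptyD := eq_empty_of_size_zero (by omega)
    subst h1
    exact Or.inl ⟨d2, TlD.empty d2⟩
  | succ n ih =>
    intro d1 d2 q q1 q2 hle hc1 hc2
    by_cases h1 : d1 = emptyD
    · subst h1; exact Or.inl ⟨d2, TlD.empty d2⟩
    by_cases h2 : d2 = emptyD
    · subst h2; exact Or.inr ⟨d1, TlD.empty d1⟩
    obtain ⟨a, d1', ht1⟩ := exists_tl h1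
    have hs1 : d1.size = d1'.size + 1 := (size_tl ht1).symm
    have hpos2 := size_pos h2
    obtain ⟨m2, hm2⟩ : ∃ m, d2.size = m + 1 := ⟨_, (Nat.succ_pred_eq_of_pos hpos2).symm⟩
    unfold SConv at hc1 hc2
    rw [hs1] at hc1
    rw [hm2] at hc2
    simp only [SConvF] at hc1 hc2
    rcases hc1 with ⟨he, _⟩ | ⟨_, hfwd, _⟩
    · exact absurd he h1
    obtain ⟨p, htr, hcp⟩ := hfwd a (mem_hdSet_of_tl ht1) d1' ht1
    rcases hc2 with ⟨he, _⟩ | ⟨_, _, hbwd⟩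
    · exact absurd he h2
    obtain ⟨d2', ht2, hcp2⟩ := hbwd a p htr
    have hs2 : m2 = d2'.size := by
      have := size_tl ht2
      omega
    rw [hs2] at hcp2
    have hsz : d1'.size + d2'.size ≤ n := by
      have := size_tl ht2
      omega
    rcases ih d1' d2' p q1 q2 hsz hcp hcp2 with ⟨r, hr⟩ | ⟨r, hr⟩
    · exact Or.inl ⟨r, TlD.step (mem_hdSet_of_tl ht1) ht2 ht1 hr⟩
    · exact Or.inr ⟨r, TlD.step (mem_hdSet_of_tl ht2) ht1 ht2 hr⟩

end AuxLemmas

open Diamond in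
theorem stmt7 {Q A : Type*} [DecidableEq A] (Tr : Q → A → Q → Prop)
    (q q1 q2 : Q) (d1 d2 : Diamond A)
    (h1 : SConv Tr Eq d1 q q1) (h2 : SConv Tr Eq d2 q q2) :
    Diamond.Prefix d1 d2 ∨ Diamond.Prefix d2 d1 :=
  stmt7_aux Tr (d1.size + d2.size) d1 d2 q q1 q2 le_rfl h1 h2
end

section
/- Any diamond equivalence relation on the states of an LTS is a strong bisimulation: if R is an equivalence relation such that for all states q̂, q̂', q̌ and diamonds ◇, q̂ R q̂' and q̂ ⟶^◇ q̌ imply q̂' ⟶^◇ [q̌]_R, then whenever q̂ R q̂' and q̂ →^a q̌, there exists q̌' with q̂' →^a q̌' and q̌ R q̌'. -/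
open Diamond in
lemma singleD_ne_emptyD {A : Type*} [DecidableEq A] (a : A) :
    singleD a ≠ emptyD := by
  intro h
  have : (singleD a).Ca a = (emptyD : Diamond A).Ca a := by rw [h]
  simp [singleD, emptyD] at this

open Diamond in
lemma hdSet_singleD {A : Type*} [DecidableEq A] (a : A) :
    hdSet (singleD a) = {a} := by
  ext b
  simp only [hdSet, singleD, Set.mem_setOf_eq, Set.mem_singleton_iff]
  constructor
  · rintro (h | ⟨s, hs, _⟩)
    · simp only [Finsupp.single_apply] at h
      by_contra hne
      rw [if_neg (fun h' => hne h'.symm)] at h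
      exact Nat.lt_irrefl 0 h
    · simp at hs
  · rintro rfl
    left
    simp

open Diamond in
lemma tl_singleD {A : Type*} [DecidableEq A] (a : A) {d' : Diamond A}
    (h : d' ∈ tl (singleD a) a) : d' = emptyD := by
  rcases h with ⟨_, hCa, hCs⟩ | ⟨s, _, hs, _⟩ | ⟨b, k, _, _, hs, _⟩
  · rcases d' with ⟨Ca, Cs, hnm⟩
    simp only [singleD] at hCa hCs
    have hCa' : Ca = 0 := by
      rw [hCa]
      ext x
      rcases eq_or_ne x a with hx | hx
      · simp [Finsupp.update, hx]
      · simp [Finsupp.update, hx, Finsupp.single_apply, Ne.symm hx]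
    cases hCa'
    cases hCs
    rfl
  · simp [singleD] at hs
  · simp [singleD] at hs

open Diamond in
lemma size_emptyD {A : Type*} [DecidableEq A] : (emptyD : Diamond A).size = 0 := by
  simp [size, emptyD]

open Diamond in
theorem stmt8 {Q A : Type*} [DecidableEq A] (Tr : Q → A → Q → Prop)
    (R : Q → Q → Prop) (hR : Equivalence R)
    (hdiam : ∀ (qh qh' qc : Q) (d : Diamond A),
      R qh qh' → Conv Tr Eq d qh qc → Conv Tr R d qh' qc) :
    ∀ (qh qh' qc : Q) (a : A), R qh qh' → Tr qh a qc →
      ∃ qc', Tr qh' a qc' ∧ R qc qc' := by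
  intro qh qh' qc a hRq hTr
  have hconv : Conv Tr Eq (singleD a) qh qc := by
    right
    refine ⟨singleD_ne_emptyD a, ?_⟩
    intro b hb d' hd'
    rw [hdSet_singleD] at hb
    subst hb
    have hd'e : d' = emptyD := tl_singleD b hd'
    subst hd'e
    exact ⟨qc, hTr, by simp [SConv, size_emptyD, SConvF]⟩
  have hconv' := hdiam qh qh' qc (singleD a) hRq hconv
  rcases hconv' with ⟨he, _⟩ | ⟨_, h⟩
  · exact absurd he (singleD_ne_emptyD a)
  · obtain ⟨p, hTr', hS⟩ := h a (by rw [hdSet_singleD]; rfl) emptyD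
      (by left; constructor
          · simp [singleD]
          · constructor
            · ext x
              rcases eq_or_ne x a with hx | hx
              · simp [emptyD, singleD, Finsupp.update, hx]
              · simp [emptyD, singleD, Finsupp.update, hx, Finsupp.single_apply, Ne.symm hx]
            · simp [emptyD, singleD])
    refine ⟨p, hTr', ?_⟩
    rw [SConv, size_emptyD] at hS
    exact hR.symm hS.2
end

section
/- In any LTS, if R is a strong bisimulation on states and q̂ R q̂', then for every diamond ◇ and state q̌: (a) if q̂ ⟶^◇ q̌ then q̂' ⟶^◇ [q̌]_R, and (b) if q̂ ⟹^◇ q̌ then q̂' ⟹^◇ [q̌]_R. -/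
open Diamond in
theorem sconvF_lift {Q A : Type*} [DecidableEq A] (Tr : Q → A → Q → Prop)
    (R : Q → Q → Prop) (hsym : ∀ {q q'}, R q q' → R q' q)
    (hbisim : ∀ {q q' qto : Q} {a : A}, R q q' → Tr q a qto →
      ∃ qto', Tr q' a qto' ∧ R qto qto') :
    ∀ (n : ℕ) (d : Diamond A) (q q' qc : Q), R q q' →
      SConvF Tr Eq n d q qc → SConvF Tr R n d q' qc := by
  intro n
  induction n with
  | zero =>
    rintro d q q' qc hR ⟨hd, rfl⟩
    exact ⟨hd, hsym hR⟩
  | succ n ih =>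
    rintro d q q' qc hR (⟨hd, rfl⟩ | ⟨hne, hfwd, hbwd⟩)
    · exact Or.inl ⟨hd, hsym hR⟩
    · refine Or.inr ⟨hne, ?_, ?_⟩
      · intro a ha d' hd'
        obtain ⟨p, hp, hc⟩ := hfwd a ha d' hd'
        obtain ⟨p', hp', hRp⟩ := hbisim hR hp
        exact ⟨p', hp', ih d' p p' qc hRp hc⟩
      · intro a p' hp'
        obtain ⟨p, hp, hRp⟩ := hbisim (hsym hR) hp'
        obtain ⟨d', hd', hc⟩ := hbwd a p hp
        exact ⟨d', hd', ih d' p p' qc (hsym hRp) hc⟩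

open Diamond in
theorem stmt9 {Q A : Type*} [DecidableEq A] (Tr : Q → A → Q → Prop)
    (R : Q → Q → Prop) (hsym : ∀ {q q'}, R q q' → R q' q)
    (hbisim : ∀ {q q' qto : Q} {a : A}, R q q' → Tr q a qto →
      ∃ qto', Tr q' a qto' ∧ R qto qto')
    (qh qh' : Q) (hqq : R qh qh') :
    ∀ (d : Diamond A) (qc : Q),
      (Conv Tr Eq d qh qc → Conv Tr R d qh' qc) ∧
      (SConv Tr Eq d qh qc → SConv Tr R d qh' qc) := by
  intro d qc
  constructor
  · rintro (⟨hd, rfl⟩ | ⟨hne, hfwd⟩)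
    · exact Or.inl ⟨hd, hsym hqq⟩
    · refine Or.inr ⟨hne, ?_⟩
      intro a ha d' hd'
      obtain ⟨p, hp, hc⟩ := hfwd a ha d' hd'
      obtain ⟨p', hp', hRp⟩ := hbisim hqq hp
      exact ⟨p', hp', sconvF_lift Tr R @hsym @hbisim _ d' p p' qc hRp hc⟩
  · exact sconvF_lift Tr R @hsym @hbisim _ d qh qh' qc hqq
end
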